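/- Simulation via residuals: (1) if t₁ ⇒ t₁′ (via a given rule instance) and L(t₀) ⊆ L(t₁) for a tuple pattern t₀ of the same arity as t₁, then the residual ⟨t₁⇒t₁′⟩(t₀) is well defined. (2) If the residual t₀′ = ⟨t₁⇒t₁′⟩(t₀) is well defined, then L(t₀) ⊆ L(t₁) if and only if L(t₀′) ⊆ L(t₁′), and L(t₀) ⊇ L(t₁) if and only if L(t₀′) ⊇ L(t₁′). -/

import Mathlib

namespace STPaper

variable {A V : Type}

/-- A word over the alphabet `A`. -/
abbrev Word (A : Type) := List A

/-- A pattern: a finite word over `A ⊕ V` (letters and variables). -/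
abbrev Pat (A V : Type) := List (A ⊕ V)

/-- A tuple pattern: a finite tuple of patterns. -/
abbrev TP (A V : Type) := List (Pat A V)

/-- A column of learning data: one word per row. -/
abbrev Col (A : Type) := List (Word A)

/-- Learning data, represented as its list of columns. -/
abbrev Data (A : Type) := List (Col A)

/-- A data-substitution `[M/x⃗]`: the number `m` of rows together with the list pairing each
variable of `x⃗` with the corresponding column of `M`. -/
structure DSub (A V : Type) where
  m : ℕ
  entries : List (V × Col A)

/-- Apply a word-valued substitution to a pattern. -/
def substPatW (θ : V → Word A) (p : Pat A V) : Word A :=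
  (p.map (Sum.elim (fun a => [a]) θ)).flatten

/-- Look up the column assigned to a variable by a data-substitution (default: all-ε). -/
def lookupCol [DecidableEq V] (E : List (V × Col A)) (x : V) : Col A :=
  match E.find? (fun e => decide (e.1 = x)) with
  | some e => e.2
  | none => []

/-- The substitution corresponding to the `i`-th row of a data-substitution. -/
def DSub.rowSub [DecidableEq V] (Θ : DSub A V) (i : ℕ) : V → Word A :=
  fun x => (lookupCol Θ.entries x).getD i []

/-- `Θ.apply t` : the matrix `Θt` (as a list of columns, each of length `Θ.m`). -/
def DSub.apply [DecidableEq V] (Θ : DSub A V) (t : TP A V) : Data A :=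
  t.map (fun p => (List.range Θ.m).map (fun i => substPatW (Θ.rowSub i) p))

/-- Well-formedness of a data-substitution: pairwise-distinct variables and
all columns of length `m`. -/
def DSub.WF (Θ : DSub A V) : Prop :=
  (Θ.entries.map Prod.fst).Nodup ∧ ∀ e ∈ Θ.entries, e.2.length = Θ.m

/-- The free variables of a tuple pattern. -/
def fvTP (t : TP A V) : Set V := {x | Sum.inr x ∈ t.flatten}

/-- Substitution of a single pattern `q` for the variable `x` in a pattern. -/
def substVar [DecidableEq A] [DecidableEq V] (x : V) (q : Pat A V) (p : Pat A V) : Pat A V :=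
  (p.map (fun s => if s = Sum.inr x then q else [s])).flatten

/-- Substitution of a single pattern `q` for the variable `x` in a tuple pattern. -/
def substVarTP [DecidableEq A] [DecidableEq V] (x : V) (q : Pat A V) (t : TP A V) : TP A V :=
  t.map (substVar x q)

/-- Simultaneous substitution `[qs/xs]p` of the patterns `qs` for the variables `xs`. -/
def substVars [DecidableEq V] (xs : List V) (qs : List (Pat A V)) (p : Pat A V) : Pat A V :=
  (p.map (fun s =>
    match s with
    | Sum.inl a => [Sum.inl a]
    | Sum.inr x =>
      match (xs.zip qs).find? (fun e => decide (e.1 = x)) with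
      | some e => e.2
      | none => [Sum.inr x])).flatten

/-- Simultaneous substitution `[qs/xs]t` on a tuple pattern. -/
def substVarsTP [DecidableEq V] (xs : List V) (qs : List (Pat A V)) (t : TP A V) : TP A V :=
  t.map (substVars xs qs)

/-- A column is the all-ε column. -/
def allEps (c : Col A) : Prop := ∀ w ∈ c, w = []

/-- The trivial tuple pattern `(x₁, …, xₙ)`. -/
def trivTP (xs : List V) : TP A V := xs.map (fun x => [Sum.inr x])

section
variable [DecidableEq A] [DecidableEq V]

/-- The rewriting relation ⟶ on pairs of a tuple pattern and a data-substitution. -/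
inductive Step : (TP A V × DSub A V) → (TP A V × DSub A V) → Prop
  | pre (t : TP A V) (m : ℕ) (E : List (V × Col A)) (i j : ℕ)
      (hi : i < E.length) (hj : j < E.length) (hij : i ≠ j)
      (s : Col A) (hslen : s.length = (E[i]'hi).2.length)
      (hpre : (E[j]'hj).2 = List.zipWith (· ++ ·) (E[i]'hi).2 s)
      (hne : ¬ allEps (E[i]'hi).2)
      (x' : V) (hx1 : x' ∉ E.map Prod.fst) (hx2 : Sum.inr x' ∉ t.flatten) :
      Step (t, ⟨m, E⟩)
        (substVarTP (E[j]'hj).1 [Sum.inr (E[i]'hi).1, Sum.inr x'] t,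
         ⟨m, E.set j (x', s)⟩)
  | cpre (t : TP A V) (m : ℕ) (E : List (V × Col A)) (j : ℕ)
      (hj : j < E.length) (a : A) (s : Col A)
      (hpre : (E[j]'hj).2 = s.map (fun w => a :: w))
      (x' : V) (hx1 : x' ∉ E.map Prod.fst) (hx2 : Sum.inr x' ∉ t.flatten) :
      Step (t, ⟨m, E⟩)
        (substVarTP (E[j]'hj).1 [Sum.inl a, Sum.inr x'] t, ⟨m, E.set j (x', s)⟩)
  | eps (t : TP A V) (m : ℕ) (E : List (V × Col A)) (j : ℕ)
      (hj : j < E.length) (heps : allEps (E[j]'hj).2) :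
      Step (t, ⟨m, E⟩) (substVarTP (E[j]'hj).1 [] t, ⟨m, E.eraseIdx j⟩)

/-- `n`-step rewriting. -/
def StepN : ℕ → (TP A V × DSub A V) → (TP A V × DSub A V) → Prop
  | 0 => fun c₁ c₂ => c₁ = c₂
  | n + 1 => fun c₁ c₃ => ∃ c₂, Step c₁ c₂ ∧ StepN n c₂ c₃

end

/-- The reduction relation ⇒ on tuple patterns. -/
inductive PStep : TP A V → TP A V → Prop
  | pre (t : TP A V) (i j : ℕ) (hi : i < t.length) (hj : j < t.length)
      (hij : i ≠ j) (p' : Pat A V)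
      (hdec : t[j]'hj = (t[i]'hi) ++ p') (hne : t[i]'hi ≠ []) :
      PStep t (t.set j p')
  | cpre (t : TP A V) (j : ℕ) (hj : j < t.length) (a : A) (p' : Pat A V)
      (hdec : t[j]'hj = Sum.inl a :: p') :
      PStep t (t.set j p')
  | eps (t : TP A V) (j : ℕ) (hj : j < t.length) (heps : t[j]'hj = []) :
      PStep t (t.eraseIdx j)

/-- A tuple pattern is solvable if it reduces to a trivial tuple of pairwise
distinct variables. -/
def Solvable (t : TP A V) : Prop :=
  ∃ ys : List V, ys.Nodup ∧ Relation.ReflTransGen PStep t (trivTP ys)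

/-- The language of a tuple pattern. -/
def lang (t : TP A V) : Set (List (Word A)) :=
  {w | ∃ θ : V → Word A, w = t.map (substPatW θ)}

/-- `M ⊨ t` : there is a data-substitution `Θ` (with `rows` rows) with `Θt = M`. -/
def Models [DecidableEq V] (M : Data A) (rows : ℕ) (t : TP A V) : Prop :=
  ∃ Θ : DSub A V, Θ.m = rows ∧ Θ.WF ∧ Θ.apply t = M

/-- `M ⊨ₛ t` : additionally, no variable of `t` is mapped to ε in every row. -/
def SModels [DecidableEq V] (M : Data A) (rows : ℕ) (t : TP A V) : Prop :=
  ∃ Θ : DSub A V, Θ.m = rows ∧ Θ.WF ∧ Θ.apply t = M ∧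
    ∀ x ∈ fvTP t, ¬ allEps (lookupCol Θ.entries x)

/-- Renaming the variables of a tuple pattern. -/
def renameTP (ρ : V → V) (t : TP A V) : TP A V :=
  t.map (List.map (Sum.map id ρ))

/-- The measure `#t` of a tuple pattern. -/
def tpMeasure (t : TP A V) : ℕ := (t.map List.length).sum + t.length

/-- `size(M)`. -/
def dataSize (M : Data A) : ℕ :=
  (M.map (fun c => (c.map (fun w => w.length + 1)).sum)).sum

/-- Learning data (as columns) whose rows enumerate the given list of tuples. -/
def colsOfRows (n : ℕ) (rows : List (List (Word A))) : Data A :=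
  (List.range n).map (fun j => rows.map (fun r => r.getD j []))

/-- `m ⊨ₛ t` for a (possibly infinite) set of tuples of words. -/
def SetSModels (S : Set (List (Word A))) (t : TP A V) : Prop :=
  ∃ θ : S → V → Word A,
    (∀ v : S, (v : List (Word A)) = t.map (substPatW (θ v))) ∧
    ∀ x ∈ fvTP t, ∃ v : S, θ v x ≠ []

/-- A rule instance of the ⇒ relation. -/
inductive RuleInst (A V : Type) where
  | pre (i j : ℕ)
  | cpre (j : ℕ) (a : A)
  | eps (j : ℕ)

/-- The reduction step derived by a given rule instance. -/
def RuleStep : RuleInst A V → TP A V → TP A V → Prop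
  | .pre i j, t, t' => ∃ (hi : i < t.length) (hj : j < t.length),
      i ≠ j ∧ t[i]'hi ≠ [] ∧ ∃ p', t[j]'hj = (t[i]'hi) ++ p' ∧ t' = t.set j p'
  | .cpre j a, t, t' => ∃ (_ : j < t.length) (p' : Pat A V),
      t.getD j [] = Sum.inl a :: p' ∧ t' = t.set j p'
  | .eps j, t, t' => ∃ (_ : j < t.length), t.getD j [] = ([] : Pat A V) ∧ t' = t.eraseIdx j

/-- Well-definedness of the residual of a tuple pattern along a rule instance. -/
def ResDefined : RuleInst A V → TP A V → Prop
  | .pre i j, t => i < t.length ∧ j < t.length ∧ (t.getD i []) <+: (t.getD j [])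
  | .cpre j a, t => j < t.length ∧ ∃ p', t.getD j [] = Sum.inl a :: p'
  | .eps j, t => j < t.length ∧ t.getD j [] = ([] : Pat A V)

/-- The residual of a tuple pattern along a rule instance. -/
def residual : RuleInst A V → TP A V → TP A V
  | .pre i j, t => t.set j ((t.getD j []).drop (t.getD i []).length)
  | .cpre j _, t => t.set j ((t.getD j []).drop 1)
  | .eps j, t => t.eraseIdx j

/-- The reduction relation ⇒ extended with the postfix rules. -/
inductive PStepX : TP A V → TP A V → Prop
  | pre (t : TP A V) (i j : ℕ) (hi : i < t.length) (hj : j < t.length)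
      (hij : i ≠ j) (p' : Pat A V)
      (hdec : t[j]'hj = (t[i]'hi) ++ p') (hne : t[i]'hi ≠ []) :
      PStepX t (t.set j p')
  | cpre (t : TP A V) (j : ℕ) (hj : j < t.length) (a : A) (p' : Pat A V)
      (hdec : t[j]'hj = Sum.inl a :: p') :
      PStepX t (t.set j p')
  | eps (t : TP A V) (j : ℕ) (hj : j < t.length) (heps : t[j]'hj = []) :
      PStepX t (t.eraseIdx j)
  | post (t : TP A V) (i j : ℕ) (hi : i < t.length) (hj : j < t.length)
      (hij : i ≠ j) (p' : Pat A V)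
      (hdec : t[j]'hj = p' ++ (t[i]'hi)) (hne : t[i]'hi ≠ []) :
      PStepX t (t.set j p')
  | cpost (t : TP A V) (j : ℕ) (hj : j < t.length) (a : A) (p' : Pat A V)
      (hdec : t[j]'hj = p' ++ [Sum.inl a]) :
      PStepX t (t.set j p')


section ResAux
variable {A V : Type}

lemma substPatW_nil (θ : V → Word A) : substPatW θ ([] : Pat A V) = [] := rfl

lemma substPatW_cons (θ : V → Word A) (s : A ⊕ V) (p : Pat A V) :
    substPatW θ (s :: p) = Sum.elim (fun a => [a]) θ s ++ substPatW θ p := by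
  simp [substPatW]

lemma substPatW_append (θ : V → Word A) (p q : Pat A V) :
    substPatW θ (p ++ q) = substPatW θ p ++ substPatW θ q := by simp [substPatW]

lemma getD_map_subst (θ : V → Word A) (t : TP A V) (k : ℕ) :
    (t.map (substPatW θ)).getD k [] = substPatW θ (t.getD k []) := by
  rcases Nat.lt_or_ge k t.length with h | h
  · rw [List.getD_eq_getElem _ _ (by simpa using h), List.getD_eq_getElem _ _ h,
      List.getElem_map]
  · rw [List.getD_eq_default _ _ (by simpa using h), List.getD_eq_default _ _ h]; rfl
lemma getD_set_ne {α : Type*} (l : List α) (j k : ℕ) (x d : α) (h : j ≠ k) :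
    (l.set j x).getD k d = l.getD k d := by
  rcases Nat.lt_or_ge k l.length with hk | hk
  · rw [List.getD_eq_getElem _ _ (by simpa using hk), List.getD_eq_getElem _ _ hk,
      List.getElem_set_ne h]
  · rw [List.getD_eq_default _ _ (by simpa using hk), List.getD_eq_default _ _ hk]
lemma getD_set_self {α : Type*} (l : List α) (j : ℕ) (x d : α) (h : j < l.length) :
    (l.set j x).getD j d = x := by
  rw [List.getD_eq_getElem _ _ (by simpa using h), List.getElem_set_self]
lemma set_getD_self {α : Type*} (l : List α) (j : ℕ) (d : α) (h : j < l.length) :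
    l.set j (l.getD j d) = l := by
  apply List.ext_getElem (by simp)
  intro n h1 h2
  rcases eq_or_ne j n with rfl | hne
  · rw [List.getElem_set_self, List.getD_eq_getElem _ _ h]
  · rw [List.getElem_set_ne hne]

-- the "expansion" maps
def expF (i j : ℕ) (w : List (Word A)) : List (Word A) :=
  w.set j (w.getD i [] ++ w.getD j [])
def consF (j : ℕ) (a : A) (w : List (Word A)) : List (Word A) :=
  w.set j (a :: w.getD j [])
def insF (j : ℕ) (w : List (Word A)) : List (Word A) := w.insertIdx j []

lemma expF_inj {i j : ℕ} (hij : i ≠ j) : Function.Injective (expF (A := A) i j) := by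
  apply Function.LeftInverse.injective
    (g := fun v => v.set j ((v.getD j []).drop (v.getD i []).length))
  intro w
  dsimp only
  rcases Nat.lt_or_ge j w.length with hj | hj
  · rw [expF, getD_set_ne _ _ _ _ _ (Ne.symm hij), getD_set_self _ _ _ _ hj,
      List.drop_left, List.set_set, set_getD_self _ _ _ hj]
  · rw [expF, List.set_eq_of_length_le hj, List.getD_eq_default _ _ hj]
    simpa using List.set_eq_of_length_le hj
lemma consF_inj {j : ℕ} (a : A) : Function.Injective (consF (A := A) j a) := by
  apply Function.LeftInverse.injective
    (g := fun v => v.set j ((v.getD j []).drop 1))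
  intro w
  dsimp only
  rcases Nat.lt_or_ge j w.length with hj | hj
  · rw [consF, getD_set_self _ _ _ _ hj, List.set_set]
    simpa using set_getD_self w j [] hj
  · rw [consF, List.set_eq_of_length_le hj, List.getD_eq_default _ _ hj]
    simpa using List.set_eq_of_length_le hj
lemma insF_inj {j : ℕ} : Function.Injective (insF (A := A) j) :=
  Function.LeftInverse.injective (g := fun v => v.eraseIdx j)
    fun w => List.eraseIdx_insertIdx_self (i := j) (l := w) []

lemma map_eraseIdx' {α β : Type*} (f : α → β) :
    ∀ (l : List α) (j : ℕ), (l.eraseIdx j).map f = (l.map f).eraseIdx j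
  | [], _ => rfl
  | _ :: _, 0 => rfl
  | x :: l, j + 1 => by
    simp only [List.eraseIdx_cons_succ, List.map_cons, map_eraseIdx' f l j]

lemma insertIdx_eraseIdx_self {α : Type*} {x : α} :
    ∀ (l : List α) (j : ℕ), j < l.length → l.getD j x = x →
      (l.eraseIdx j).insertIdx j x = l
  | [], j, h, _ => by simp at h
  | y :: l, 0, _, hx => by simp at hx; simp [hx]
  | y :: l, j + 1, h, hx => by
    simp only [List.eraseIdx_cons_succ, List.insertIdx_succ_cons, List.cons.injEq,
      true_and]
    exact insertIdx_eraseIdx_self l j (by simpa using h) (by simpa using hx)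

lemma pre_pointwise (t : TP A V) (i j : ℕ) (hij : i ≠ j) (hi : i < t.length)
    (hj : j < t.length) (p' : Pat A V) (hdec : t.getD j [] = t.getD i [] ++ p')
    (θ : V → Word A) :
    t.map (substPatW θ) = expF i j ((t.set j p').map (substPatW θ)) := by
  rw [expF, List.map_set]
  apply List.ext_getElem (by simp)
  intro n h1 h2
  rcases eq_or_ne j n with rfl | hne
  · rw [List.getElem_set_self, getD_set_ne _ _ _ _ _ (Ne.symm hij), getD_map_subst,
      getD_set_self _ _ _ _ (by simpa using hj), List.getElem_map,
      ← List.getD_eq_getElem t [] (by simpa using h1), hdec, substPatW_append]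
  · simp [List.getElem_set_ne hne]

lemma cpre_pointwise (t : TP A V) (j : ℕ) (hj : j < t.length) (a : A) (p' : Pat A V)
    (hdec : t.getD j [] = Sum.inl a :: p') (θ : V → Word A) :
    t.map (substPatW θ) = consF j a ((t.set j p').map (substPatW θ)) := by
  rw [consF, List.map_set]
  apply List.ext_getElem (by simp)
  intro n h1 h2
  rcases eq_or_ne j n with rfl | hne
  · rw [List.getElem_set_self, getD_set_self _ _ _ _ (by simpa using hj),
      List.getElem_map, ← List.getD_eq_getElem t [] (by simpa using h1), hdec]
    rfl
  · simp [List.getElem_set_ne hne]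

lemma eps_pointwise (t : TP A V) (j : ℕ) (hj : j < t.length)
    (heps : t.getD j [] = []) (θ : V → Word A) :
    t.map (substPatW θ) = insF j ((t.eraseIdx j).map (substPatW θ)) := by
  rw [insF, map_eraseIdx']
  refine (insertIdx_eraseIdx_self _ _ (by simpa using hj) ?_).symm
  rw [getD_map_subst, heps]
  rfl

lemma lang_eq_image (F : List (Word A) → List (Word A)) (t t' : TP A V)
    (h : ∀ θ : V → Word A, t.map (substPatW θ) = F (t'.map (substPatW θ))) :
    lang t = F '' lang t' := by
  ext w
  constructor
  · rintro ⟨θ, rfl⟩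
    exact ⟨t'.map (substPatW θ), ⟨θ, rfl⟩, (h θ).symm⟩
  · rintro ⟨v, ⟨θ, rfl⟩, rfl⟩
    exact ⟨θ, (h θ).symm⟩

lemma subset_iffs {F : List (Word A) → List (Word A)} (hF : Function.Injective F)
    {S₀ S₁ S₀' S₁' : Set (List (Word A))} (h₀ : S₀ = F '' S₀') (h₁ : S₁ = F '' S₁') :
    (S₀ ⊆ S₁ ↔ S₀' ⊆ S₁') ∧ (S₁ ⊆ S₀ ↔ S₁' ⊆ S₀') := by
  subst h₀ h₁
  exact ⟨Set.image_subset_image_iff hF, Set.image_subset_image_iff hF⟩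


lemma prefix_of_all [Nontrivial A] (p q : Pat A V)
    (h : ∀ θ : V → Word A, substPatW θ p <+: substPatW θ q) : p <+: q := by
  classical
  induction p generalizing q with
  | nil => exact List.nil_prefix
  | cons s p ih =>
    obtain ⟨a, b, hab⟩ := exists_pair_ne A
    cases q with
    | nil =>
      exfalso
      have h1 := h (fun _ => [a])
      rw [substPatW_nil, List.prefix_nil, substPatW_cons] at h1
      rcases s with c | x <;> simp at h1
    | cons s' q =>
      have hss : s = s' := by
        rcases s with c | x <;> rcases s' with d | y
        · have h1 := h (fun _ => [a])
          rw [substPatW_cons, substPatW_cons] at h1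
          simp only [Sum.elim_inl, List.singleton_append] at h1
          exact congrArg Sum.inl (List.cons_prefix_cons.mp h1).1
        · exfalso
          obtain ⟨b', hb'⟩ := exists_ne c
          have h1 := h (fun _ => [b'])
          rw [substPatW_cons, substPatW_cons] at h1
          simp only [Sum.elim_inl, Sum.elim_inr, List.singleton_append] at h1
          exact hb' ((List.cons_prefix_cons.mp h1).1).symm
        · exfalso
          obtain ⟨b', hb'⟩ := exists_ne d
          have h1 := h (fun _ => [b'])
          rw [substPatW_cons, substPatW_cons] at h1
          simp only [Sum.elim_inl, Sum.elim_inr, List.singleton_append] at h1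
          exact hb' (List.cons_prefix_cons.mp h1).1
        · rcases eq_or_ne x y with rfl | hxy
          · rfl
          · exfalso
            have h1 := h (fun z => if z = x then [a] else [b])
            rw [substPatW_cons, substPatW_cons] at h1
            simp only [Sum.elim_inr, if_pos rfl, if_neg (Ne.symm hxy),
              List.singleton_append] at h1
            exact hab (List.cons_prefix_cons.mp h1).1
      subst hss
      refine List.cons_prefix_cons.mpr ⟨rfl, ih q fun θ => ?_⟩
      have h1 := h θ
      rw [substPatW_cons, substPatW_cons] at h1
      exact (List.prefix_append_right_inj _).mp h1

lemma eq_nil_of_subst_nil (p : Pat A V) (a : A)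
    (h : substPatW (fun _ => [a]) p = []) : p = [] := by
  cases p with
  | nil => rfl
  | cons s p => rcases s with c | x <;> simp [substPatW_cons] at h

lemma head_letter_of_all [Nontrivial A] (p : Pat A V) (a : A)
    (h : ∀ θ : V → Word A, ∃ w, substPatW θ p = a :: w) :
    ∃ p', p = Sum.inl a :: p' := by
  cases p with
  | nil =>
    obtain ⟨w, hw⟩ := h (fun _ => [a])
    simp [substPatW_nil] at hw
  | cons s p =>
    rcases s with c | x
    · obtain ⟨w, hw⟩ := h (fun _ => [a])
      rw [substPatW_cons] at hw
      simp only [Sum.elim_inl, List.singleton_append, List.cons.injEq] at hw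
      exact ⟨p, by rw [hw.1]⟩
    · exfalso
      obtain ⟨b', hb'⟩ := exists_ne a
      obtain ⟨w, hw⟩ := h (fun _ => [b'])
      rw [substPatW_cons] at hw
      simp only [Sum.elim_inr, List.singleton_append, List.cons.injEq] at hw
      exact hb' hw.1

end ResAux

/-- **Simulation via residuals.**
(1) If `t₁ ⇒ t₁′` via a given rule instance `r` and `L(t₀) ⊆ L(t₁)` for a tuple pattern
`t₀` of the same arity as `t₁`, then the residual `⟨t₁⇒t₁′⟩(t₀)` is well defined.
(2) If the residual `t₀′ = ⟨t₁⇒t₁′⟩(t₀)` is well defined, then `L(t₀) ⊆ L(t₁)` iff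
`L(t₀′) ⊆ L(t₁′)`, and `L(t₀) ⊇ L(t₁)` iff `L(t₀′) ⊇ L(t₁′)`. -/
theorem residual_simulation [Nontrivial A] [Countable V] [Infinite V]
    (r : RuleInst A V) (t₁ t₁' t₀ : TP A V)
    (hstep : RuleStep r t₁ t₁') (harity : t₀.length = t₁.length) :
    (lang t₀ ⊆ lang t₁ → ResDefined r t₀) ∧
    (ResDefined r t₀ →
      (lang t₀ ⊆ lang t₁ ↔ lang (residual r t₀) ⊆ lang t₁') ∧
      (lang t₁ ⊆ lang t₀ ↔ lang t₁' ⊆ lang (residual r t₀))) := by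
  classical
  obtain ⟨a0, b0, hab0⟩ := exists_pair_ne A
  rcases r with ⟨i, j⟩ | ⟨j, a⟩ | j
  · -- PR-Prefix
    obtain ⟨hi1, hj1, hij, hne, p', hdec1, rfl⟩ := hstep
    have hdec1' : t₁.getD j [] = t₁.getD i [] ++ p' := by
      rw [List.getD_eq_getElem _ _ hj1, List.getD_eq_getElem _ _ hi1, hdec1]
    constructor
    · intro hsub
      refine ⟨by omega, by omega, ?_⟩
      apply prefix_of_all
      intro θ
      obtain ⟨θ', hθ'⟩ := hsub ⟨θ, rfl⟩
      have hgi : substPatW θ (t₀.getD i []) = substPatW θ' (t₁.getD i []) := by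
        rw [← getD_map_subst, hθ', getD_map_subst]
      have hgj : substPatW θ (t₀.getD j []) = substPatW θ' (t₁.getD j []) := by
        rw [← getD_map_subst, hθ', getD_map_subst]
      rw [hgi, hgj, hdec1', substPatW_append]
      exact List.prefix_append _ _
    · rintro ⟨hi0, hj0, hpre0⟩
      obtain ⟨r0, hr0⟩ := hpre0
      have hdrop : (t₀.getD j []).drop (t₀.getD i []).length = r0 := by
        rw [← hr0, List.drop_left]
      have e0 : lang t₀ = expF i j '' lang (residual (RuleInst.pre i j) t₀) := by
        simp only [residual, hdrop]
        exact lang_eq_image _ _ _ (pre_pointwise t₀ i j hij hi0 hj0 r0 hr0.symm)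
      have e1 : lang t₁ = expF i j '' lang (t₁.set j p') :=
        lang_eq_image _ _ _ (pre_pointwise t₁ i j hij hi1 hj1 p' hdec1')
      exact subset_iffs (expF_inj hij) e0 e1
  · -- PR-CPrefix
    obtain ⟨hj1, p', hdec1, rfl⟩ := hstep
    constructor
    · intro hsub
      refine ⟨by omega, ?_⟩
      apply head_letter_of_all _ a
      intro θ
      obtain ⟨θ', hθ'⟩ := hsub ⟨θ, rfl⟩
      refine ⟨substPatW θ' p', ?_⟩
      rw [← getD_map_subst, hθ', getD_map_subst, hdec1, substPatW_cons]
      rfl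
    · rintro ⟨hj0, p0', hdec0⟩
      have hdrop : (t₀.getD j []).drop 1 = p0' := by rw [hdec0]; rfl
      have e0 : lang t₀ = consF j a '' lang (residual (RuleInst.cpre j a) t₀) := by
        simp only [residual, hdrop]
        exact lang_eq_image _ _ _ (cpre_pointwise t₀ j hj0 a p0' hdec0)
      have e1 : lang t₁ = consF j a '' lang (t₁.set j p') :=
        lang_eq_image _ _ _ (cpre_pointwise t₁ j hj1 a p' hdec1)
      exact subset_iffs (consF_inj a) e0 e1
  · -- PR-Epsilon
    obtain ⟨hj1, heps1, rfl⟩ := hstep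
    constructor
    · intro hsub
      refine ⟨by omega, ?_⟩
      apply eq_nil_of_subst_nil _ a0
      obtain ⟨θ', hθ'⟩ := hsub ⟨fun _ => [a0], rfl⟩
      rw [← getD_map_subst, hθ', getD_map_subst, heps1, substPatW_nil]
    · rintro ⟨hj0, heps0⟩
      have e0 : lang t₀ = insF j '' lang (residual (RuleInst.eps j) t₀) := by
        simp only [residual]
        exact lang_eq_image _ _ _ (eps_pointwise t₀ j hj0 heps0)
      have e1 : lang t₁ = insF j '' lang (t₁.eraseIdx j) :=
        lang_eq_image _ _ _ (eps_pointwise t₁ j hj1 heps1)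
      exact subset_iffs insF_inj e0 e1


end STPaper
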